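/- Let {𝒜_k}_{k≥1} be a sequence of labyrinth patterns with widths m_k ≥ 3, and set m(0) = 1 and m(k) = m_1⋯m_k. Let (t_1,t_2) and (b_1,b_2) be the Cartesian coordinates of the top exit and the bottom exit of L_∞, and for each k ≥ 1 let (x_{1,t}^k, x_{2,t}^k) be the Cartesian coordinates of the lower-left vertex of the square that is the top exit of 𝒜_k. Then t_1 = b_1 = Σ_{k=1}^∞ x_{1,t}^k / m(k−1), t_2 = 1, and b_2 = 0. -/

import Mathlib

open Set

namespace Labyrinth

/-- The closed square `S_{i,j,m} = [i/m,(i+1)/m] × [j/m,(j+1)/m]` of the `m × m` grid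
on the unit square, indexed by `p = (i,j)`. -/
def cell (m : ℕ) (p : ℕ × ℕ) : Set (ℝ × ℝ) :=
  Icc ((p.1 : ℝ) / (m : ℝ)) (((p.1 : ℝ) + 1) / (m : ℝ)) ×ˢ
    Icc ((p.2 : ℝ) / (m : ℝ)) (((p.2 : ℝ) + 1) / (m : ℝ))

/-- An `m`-pattern: a nonempty set of grid indices within the `m × m` grid. -/
def IsPattern (m : ℕ) (A : Set (ℕ × ℕ)) : Prop :=
  A.Nonempty ∧ ∀ p ∈ A, p.1 < m ∧ p.2 < m

/-- Two grid squares share a side. -/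
def SideAdj (p q : ℕ × ℕ) : Prop :=
  (p.1 = q.1 ∧ (p.2 + 1 = q.2 ∨ q.2 + 1 = p.2)) ∨
  (p.2 = q.2 ∧ (p.1 + 1 = q.1 ∨ q.1 + 1 = p.1))

/-- Two grid squares share a side or a corner. -/
def CornerAdj (p q : ℕ × ℕ) : Prop :=
  SideAdj p q ∨
  ((p.1 + 1 = q.1 ∨ q.1 + 1 = p.1) ∧ (p.2 + 1 = q.2 ∨ q.2 + 1 = p.2))

/-- The graph `𝒢(𝒜)` of a pattern: vertices are its squares, two squares being
adjacent iff they share a side. -/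
def patternGraph (A : Set (ℕ × ℕ)) : SimpleGraph ↥A where
  Adj p q := SideAdj p.1 q.1
  symm := ⟨by
    rintro ⟨p, hp⟩ ⟨q, hq⟩ h
    rcases h with ⟨h1, h2⟩ | ⟨h1, h2⟩
    · exact Or.inl ⟨h1.symm, h2.symm⟩
    · exact Or.inr ⟨h1.symm, h2.symm⟩⟩
  loopless := ⟨by
    rintro ⟨p, hp⟩ h
    rcases h with ⟨h1, h2 | h2⟩ | ⟨h1, h2 | h2⟩ <;> omega⟩

/-- The four sides of a square/pattern. -/
inductive Side | top | bottom | left | right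
deriving DecidableEq

/-- `p` is an exit square of the `m`-pattern `A` on the given side. -/
def IsExitSq (m : ℕ) (A : Set (ℕ × ℕ)) : Side → ℕ × ℕ → Prop
  | .top, p => p ∈ A ∧ p.2 = m - 1 ∧ (p.1, 0) ∈ A
  | .bottom, p => p ∈ A ∧ p.2 = 0 ∧ (p.1, m - 1) ∈ A
  | .left, p => p ∈ A ∧ p.1 = 0 ∧ (m - 1, p.2) ∈ A
  | .right, p => p ∈ A ∧ p.1 = m - 1 ∧ (0, p.2) ∈ A

/-- An `m × m`-labyrinth pattern: a nonempty `m`-pattern, `m ≥ 3`, whose graph is a tree,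
with exactly one vertical and exactly one horizontal exit pair, and no two white squares
at diagonally opposite corners. -/
def IsLabyrinthPattern (m : ℕ) (A : Set (ℕ × ℕ)) : Prop :=
  3 ≤ m ∧ IsPattern m A ∧ (patternGraph A).IsTree ∧
    (∃! i : ℕ, (i, m - 1) ∈ A ∧ (i, 0) ∈ A) ∧
    (∃! j : ℕ, (0, j) ∈ A ∧ (m - 1, j) ∈ A) ∧
    ((0, 0) ∈ A → (m - 1, m - 1) ∉ A) ∧
    ((m - 1, 0) ∈ A → (0, m - 1) ∉ A)

/-- A wild labyrinth pattern: the graph is merely connected, and there is at least one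
vertical and at least one horizontal exit pair. -/
def IsWildLabyrinthPattern (m : ℕ) (A : Set (ℕ × ℕ)) : Prop :=
  3 ≤ m ∧ IsPattern m A ∧ (patternGraph A).Connected ∧
    (∃ i : ℕ, (i, m - 1) ∈ A ∧ (i, 0) ∈ A) ∧
    (∃ j : ℕ, (0, j) ∈ A ∧ (m - 1, j) ∈ A) ∧
    ((0, 0) ∈ A → (m - 1, m - 1) ∉ A) ∧
    ((m - 1, 0) ∈ A → (0, m - 1) ∉ A)

/-- One substitution step: place a copy of the pattern `A'` (of width `m'`) into each
white square of `W`. -/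
def subst (m' : ℕ) (A' W : Set (ℕ × ℕ)) : Set (ℕ × ℕ) :=
  {q | ∃ p ∈ W, ∃ r ∈ A', q = (p.1 * m' + r.1, p.2 * m' + r.2)}

/-- The white squares `𝒲_n` of level `n`; `whites m A n` is the paper's `𝒲_n`, where
`A k` is the paper's pattern `𝒜_{k+1}` of width `m k = m_{k+1}`; level `0` is the whole
unit square. -/
def whites (m : ℕ → ℕ) (A : ℕ → Set (ℕ × ℕ)) : ℕ → Set (ℕ × ℕ)
  | 0 => {(0, 0)}
  | n + 1 => subst (m n) (A n) (whites m A n)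

/-- `m(n) = m_1 ⋯ m_n`. -/
def mProd (m : ℕ → ℕ) (n : ℕ) : ℕ := ∏ k ∈ Finset.range n, m k

/-- The black squares `ℬ_n` of level `n`. -/
def blacks (m : ℕ → ℕ) (A : ℕ → Set (ℕ × ℕ)) (n : ℕ) : Set (ℕ × ℕ) :=
  {p : ℕ × ℕ | p.1 < mProd m n ∧ p.2 < mProd m n} \ whites m A n

/-- A border square of the `m × m` grid. -/
def IsBorder (m : ℕ) (p : ℕ × ℕ) : Prop :=
  p.1 = 0 ∨ p.2 = 0 ∨ p.1 = m - 1 ∨ p.2 = m - 1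

/-- `L_n`, the union of the white squares of level `n`. -/
def levelSet (m : ℕ → ℕ) (A : ℕ → Set (ℕ × ℕ)) (n : ℕ) : Set (ℝ × ℝ) :=
  ⋃ p ∈ whites m A n, cell (mProd m n) p

/-- `L_∞ = ⋂_{n ≥ 1} L_n` (the term `n = 0` is the whole unit square). -/
def limitSet (m : ℕ → ℕ) (A : ℕ → Set (ℕ × ℕ)) : Set (ℝ × ℝ) :=
  ⋂ n, levelSet m A n

def unitSquare : Set (ℝ × ℝ) := Icc (0 : ℝ) 1 ×ˢ Icc (0 : ℝ) 1

/-- A path in a graph (with adjacency `Adj`, within the vertex set `A`)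
from `u` to `v`: a nonempty list of distinct, consecutively adjacent squares of `A`,
starting at `u` and ending at `v`. -/
def IsPathIn (Adj : ℕ × ℕ → ℕ × ℕ → Prop) (A : Set (ℕ × ℕ))
    (l : List (ℕ × ℕ)) (u v : ℕ × ℕ) : Prop :=
  l ≠ [] ∧ l.Nodup ∧ l.Chain' Adj ∧ (∀ p ∈ l, p ∈ A) ∧
    l.head? = some u ∧ l.getLast? = some v

/-- `s` is an arc between `a` and `b`: a homeomorphic image of `[0,1]`
with endpoints `a` and `b`. -/
def IsArc (s : Set (ℝ × ℝ)) (a b : ℝ × ℝ) : Prop :=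
  ∃ f : ℝ → ℝ × ℝ, ContinuousOn f (Icc 0 1) ∧ InjOn f (Icc 0 1) ∧
    f '' Icc 0 1 = s ∧ f 0 = a ∧ f 1 = b

/-- `e` is the exit point of `L_∞` of the given type: for every `n ≥ 1` it lies in the
exit square of that type of `𝒲_n`. -/
def IsExitPoint (m : ℕ → ℕ) (A : ℕ → Set (ℕ × ℕ)) (s : Side) (e : ℝ × ℝ) : Prop :=
  ∀ n, 1 ≤ n → ∃ p, IsExitSq (mProd m n) (whites m A n) s p ∧ e ∈ cell (mProd m n) p

/-- The (closed) edge of the grid square `p` of the `m × m` grid on the given side. -/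
def cellEdge (m : ℕ) (p : ℕ × ℕ) : Side → Set (ℝ × ℝ)
  | .top => Icc ((p.1 : ℝ) / (m : ℝ)) (((p.1 : ℝ) + 1) / (m : ℝ)) ×ˢ {((p.2 : ℝ) + 1) / (m : ℝ)}
  | .bottom => Icc ((p.1 : ℝ) / (m : ℝ)) (((p.1 : ℝ) + 1) / (m : ℝ)) ×ˢ {(p.2 : ℝ) / (m : ℝ)}
  | .left => {(p.1 : ℝ) / (m : ℝ)} ×ˢ Icc ((p.2 : ℝ) / (m : ℝ)) (((p.2 : ℝ) + 1) / (m : ℝ))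
  | .right => {((p.1 : ℝ) + 1) / (m : ℝ)} ×ˢ Icc ((p.2 : ℝ) / (m : ℝ)) (((p.2 : ℝ) + 1) / (m : ℝ))

/-- Directions in the grid. -/
inductive Dir | up | down | left | right
deriving DecidableEq

/-- `stepDir p q d`: the square `q` is the neighbour of `p` in direction `d`. -/
def stepDir (p q : ℕ × ℕ) : Dir → Prop
  | .up => q.1 = p.1 ∧ q.2 = p.2 + 1
  | .down => q.1 = p.1 ∧ p.2 = q.2 + 1
  | .left => q.2 = p.2 ∧ p.1 = q.1 + 1
  | .right => q.2 = p.2 ∧ q.1 = p.1 + 1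

/-- The outward direction through a given side. -/
def outDir : Side → Dir
  | .top => .up
  | .bottom => .down
  | .left => .left
  | .right => .right

def sideOfDir : Dir → Side
  | .up => .top
  | .down => .bottom
  | .left => .left
  | .right => .right

/-- The six types `A, B, C, D, E, F` of paths (and of squares within a path). -/
inductive PTy | A | B | C | D | E | F
deriving DecidableEq

instance : Fintype PTy :=
  ⟨{PTy.A, PTy.B, PTy.C, PTy.D, PTy.E, PTy.F}, by intro x; cases x <;> decide⟩

/-- The exit at which the `x`-path starts: `A`: top→bottom, `B`: left→right,
`C`: top→right, `D`: right→bottom, `E`: bottom→left, `F`: left→top. -/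
def startSide : PTy → Side
  | .A => .top
  | .B => .left
  | .C => .top
  | .D => .right
  | .E => .bottom
  | .F => .left

/-- The exit at which the `x`-path ends. -/
def endSide : PTy → Side
  | .A => .bottom
  | .B => .right
  | .C => .right
  | .D => .bottom
  | .E => .left
  | .F => .top

/-- The two neighbour directions characterising a square of each type. -/
def ptyDirPair : PTy → Dir × Dir
  | .A => (.up, .down)
  | .B => (.left, .right)
  | .C => (.up, .right)
  | .D => (.right, .down)
  | .E => (.down, .left)
  | .F => (.left, .up)

def ptyDirs (τ : PTy) : Set Dir := {(ptyDirPair τ).1, (ptyDirPair τ).2}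

/-- The set of directions from the `i`-th square of the path `l` towards its neighbours
within the path, where the first and last squares (exit squares) are regarded as having
an additional neighbour outside the unit square, in directions `dstart`, `dend`
respectively. -/
def pathDirs (l : List (ℕ × ℕ)) (dstart dend : Dir) (i : ℕ) : Set Dir :=
  {d | (∃ p q, l[i]? = some p ∧ l[i - 1]? = some q ∧ 0 < i ∧ stepDir p q d)
    ∨ (∃ p q, l[i]? = some p ∧ l[i + 1]? = some q ∧ stepDir p q d)
    ∨ (i = 0 ∧ d = dstart)
    ∨ (i + 1 = l.length ∧ d = dend)}

/-- The number of `τ`-squares of the path `l` (with outward exit directions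
`dstart`, `dend`). -/
noncomputable def countTy (l : List (ℕ × ℕ)) (dstart dend : Dir) (τ : PTy) : ℕ :=
  {i | i < l.length ∧ pathDirs l dstart dend i = ptyDirs τ}.ncard

/-- `M(n) = M_1 ⋅ M_2 ⋅ ⋯ ⋅ M_n`. -/
def matProd (M : ℕ → Matrix PTy PTy ℕ) (n : ℕ) : Matrix PTy PTy ℕ :=
  ((List.range n).map M).prod

/-- A simple closed curve: a subspace homeomorphic to the circle. -/
def IsSimpleClosedCurve (s : Set (ℝ × ℝ)) : Prop :=
  Nonempty (↥s ≃ₜ AddCircle (1 : ℝ))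

/-- The number of `δ`-mesh squares meeting `E`. -/
noncomputable def meshCount (δ : ℝ) (E : Set (ℝ × ℝ)) : ℕ :=
  {q : ℤ × ℤ | (E ∩ (Icc ((q.1 : ℝ) * δ) (((q.1 : ℝ) + 1) * δ) ×ˢ
      Icc ((q.2 : ℝ) * δ) (((q.2 : ℝ) + 1) * δ))).Nonempty}.ncard

/-- The lower box-counting dimension of `E ⊆ ℝ²`. -/
noncomputable def lowerBoxDim (E : Set (ℝ × ℝ)) : ℝ :=
  Filter.liminf (fun δ : ℝ => Real.log (meshCount δ E) / (-Real.log δ)) (nhdsWithin 0 (Ioi 0))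

/-- The upper box-counting dimension of `E ⊆ ℝ²`. -/
noncomputable def upperBoxDim (E : Set (ℝ × ℝ)) : ℝ :=
  Filter.limsup (fun δ : ℝ => Real.log (meshCount δ E) / (-Real.log δ)) (nhdsWithin 0 (Ioi 0))

end Labyrinth

/-!
Placing a copy of `𝒜_{n+1}` into every square of `𝒲_n`, a square of `𝒲_{n+1}` lies in the top
(bottom) row only if it is the top (bottom) row square of a pattern copy sitting in the top
(bottom) row of `𝒲_n`. Hence the unique vertical exit pair of `𝒲_{n+1}` lies in column
`N_{n+1} = N_n m_{n+1} + c_{n+1}`, where `N_n` is that of `𝒲_n` and `c_{n+1}` that of `𝒜_{n+1}`,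
so `N_n / m(n)` is the `n`-th partial sum of the series. The top and bottom exits of `L_∞` lie in
the exit squares of every level, within `1/m(n)` of `(N_n / m(n), 1)` and `(N_n / m(n), 0)`.
-/

namespace Labyrinth

open Filter Topology

theorem _root_.Nat.eq_and_eq_of_mul_add_eq_mul_add {a b c a' c' : ℕ} (hc : c < b) (hc' : c' < b)
    (h : a * b + c = a' * b + c') : a = a' ∧ c = c' := by
  have hcc' : c = c' := by
    rw [← Nat.mul_add_mod_of_lt (a := a) hc, h, Nat.mul_add_mod_of_lt hc']
  subst hcc'
  exact ⟨Nat.eq_of_mul_eq_mul_right (by omega) (Nat.add_right_cancel h), rfl⟩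

theorem tendsto_of_mem_Icc_add {ι : Type*} {l : Filter ι} {a ε : ι → ℝ} {x : ℝ}
    (hε : Tendsto ε l (𝓝 0)) (hx : ∀ᶠ i in l, x ∈ Icc (a i) (a i + ε i)) :
    Tendsto a l (𝓝 x) := by
  refine tendsto_of_tendsto_of_tendsto_of_le_of_le' (g := fun i => x - ε i)
    (by simpa using tendsto_const_nhds.sub hε) tendsto_const_nhds ?_ ?_
  · filter_upwards [hx] with i hi
    linarith [hi.2]
  · filter_upwards [hx] with i hi
    exact hi.1

theorem tendsto_div_of_mem_cell {ι : Type*} {l : Filter ι} {M : ι → ℕ} {p : ι → ℕ × ℕ}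
    {e : ℝ × ℝ} (hM : Tendsto (fun i => (M i : ℝ)) l atTop)
    (he : ∀ᶠ i in l, e ∈ cell (M i) (p i)) :
    Tendsto (fun i => ((p i).1 : ℝ) / M i) l (𝓝 e.1) ∧
      Tendsto (fun i => ((p i).2 : ℝ) / M i) l (𝓝 e.2) := by
  have hε : Tendsto (fun i => 1 / (M i : ℝ)) l (𝓝 0) := by
    simpa only [one_div, Function.comp_def] using tendsto_inv_atTop_zero.comp hM
  constructor <;> refine tendsto_of_mem_Icc_add hε ?_ <;> filter_upwards [he] with i hi
  · simpa only [add_div] using (mem_prod.1 hi).1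
  · simpa only [add_div] using (mem_prod.1 hi).2

theorem tendsto_natCast_sub_one_div_self {ι : Type*} {l : Filter ι} {M : ι → ℕ}
    (hM : Tendsto (fun i => (M i : ℝ)) l atTop) :
    Tendsto (fun i => ((M i - 1 : ℕ) : ℝ) / M i) l (𝓝 1) := by
  have h : Tendsto (fun i => 1 - 1 / (M i : ℝ)) l (𝓝 1) := by
    simpa only [one_div, sub_zero, Function.comp_def] using
      tendsto_const_nhds.sub (tendsto_inv_atTop_zero.comp hM)
  refine h.congr' ?_
  filter_upwards [hM.eventually_ge_atTop 1] with i hi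
  have hi' : 1 ≤ M i := by exact_mod_cast hi
  rw [Nat.cast_sub hi', Nat.cast_one, sub_div, div_self (by positivity)]

theorem mProd_succ (m : ℕ → ℕ) (n : ℕ) : mProd m (n + 1) = mProd m n * m n :=
  Finset.prod_range_succ m n

theorem mProd_pos {m : ℕ → ℕ} (hm : ∀ k, 0 < m k) (n : ℕ) : 0 < mProd m n :=
  Finset.prod_pos fun k _ => hm k

theorem tendsto_mProd_atTop {m : ℕ → ℕ} (hm : ∀ k, 2 ≤ m k) :
    Tendsto (fun n => (mProd m n : ℝ)) atTop atTop := by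
  have hpow (n : ℕ) : 2 ^ n ≤ mProd m n := by
    simpa [mProd] using Finset.pow_card_le_prod (Finset.range n) m 2 fun k _ => hm k
  exact tendsto_natCast_atTop_atTop.comp <|
    tendsto_atTop_mono (fun n => (Nat.lt_pow_self one_lt_two).le.trans (hpow n)) tendsto_id

def VerticalExitPairAt (M : ℕ) (W : Set (ℕ × ℕ)) (c : ℕ) : Prop :=
  ∀ i, (i, M - 1) ∈ W ∧ (i, 0) ∈ W ↔ i = c

theorem IsLabyrinthPattern.verticalExitPairAt {m c : ℕ} {A : Set (ℕ × ℕ)}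
    (hA : IsLabyrinthPattern m A) (hc : IsExitSq m A Side.top (c, m - 1)) :
    VerticalExitPairAt m A c := fun i =>
  ⟨fun hi => hA.2.2.2.1.unique hi ⟨hc.1, hc.2.2⟩, by rintro rfl; exact ⟨hc.1, hc.2.2⟩⟩

namespace VerticalExitPairAt

variable {M c : ℕ} {W : Set (ℕ × ℕ)}

theorem isExitSq_top_iff (hW : VerticalExitPairAt M W c) {p : ℕ × ℕ} :
    IsExitSq M W Side.top p ↔ p = (c, M - 1) := by
  obtain ⟨i, j⟩ := p
  simp only [IsExitSq, Prod.mk.injEq]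
  constructor
  · rintro ⟨hp, rfl, h0⟩
    exact ⟨(hW i).1 ⟨hp, h0⟩, rfl⟩
  · rintro ⟨rfl, rfl⟩
    exact ⟨((hW i).2 rfl).1, rfl, ((hW i).2 rfl).2⟩

theorem isExitSq_bottom_iff (hW : VerticalExitPairAt M W c) {p : ℕ × ℕ} :
    IsExitSq M W Side.bottom p ↔ p = (c, 0) := by
  obtain ⟨i, j⟩ := p
  simp only [IsExitSq, Prod.mk.injEq]
  constructor
  · rintro ⟨hp, rfl, h1⟩
    exact ⟨(hW i).1 ⟨h1, hp⟩, rfl⟩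
  · rintro ⟨rfl, rfl⟩
    exact ⟨((hW i).2 rfl).2, rfl, ((hW i).2 rfl).1⟩

theorem subst {m' c' : ℕ} {A' : Set (ℕ × ℕ)} (hA' : ∀ r ∈ A', r.1 < m' ∧ r.2 < m')
    (hM : 0 < M) (hW : VerticalExitPairAt M W c) (hA'c : VerticalExitPairAt m' A' c') :
    VerticalExitPairAt (M * m') (Labyrinth.subst m' A' W) (c * m' + c') := by
  have hm' : 0 < m' := ((hA' _ ((hA'c c').2 rfl).2).1).pos
  have htop_row : M * m' - 1 = (M - 1) * m' + (m' - 1) := by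
    have : m' ≤ M * m' := Nat.le_mul_of_pos_left m' hM
    rw [Nat.sub_mul, one_mul]
    omega
  intro i
  constructor
  · rintro ⟨⟨⟨p₁, p₂⟩, hp, ⟨r₁, r₂⟩, hr, htop⟩, ⟨⟨p₁', p₂'⟩, hp', ⟨r₁', r₂'⟩, hr', hbot⟩⟩
    simp only [Prod.mk.injEq] at htop hbot
    obtain ⟨rfl, rfl⟩ := Nat.eq_and_eq_of_mul_add_eq_mul_add (hA' _ hr).2 (by omega)
      (htop.2.symm.trans htop_row)
    obtain ⟨rfl, rfl⟩ := Nat.eq_and_eq_of_mul_add_eq_mul_add (hA' _ hr').2 hm'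
      (hbot.2.symm.trans (zero_mul m').symm)
    obtain ⟨rfl, rfl⟩ := Nat.eq_and_eq_of_mul_add_eq_mul_add (hA' _ hr).1 (hA' _ hr').1
      (htop.1.symm.trans hbot.1)
    rw [htop.1, (hW p₁).1 ⟨hp, hp'⟩, (hA'c r₁).1 ⟨hr, hr'⟩]
  · rintro rfl
    exact ⟨⟨(c, M - 1), ((hW c).2 rfl).1, (c', m' - 1), ((hA'c c').2 rfl).1, by simp [htop_row]⟩,
      ⟨(c, 0), ((hW c).2 rfl).2, (c', 0), ((hA'c c').2 rfl).2, by simp⟩⟩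

end VerticalExitPairAt

def exitColumn (m c : ℕ → ℕ) : ℕ → ℕ
  | 0 => 0
  | n + 1 => exitColumn m c n * m n + c n

theorem verticalExitPairAt_whites {m c : ℕ → ℕ} {A : ℕ → Set (ℕ × ℕ)}
    (hA : ∀ k, ∀ r ∈ A k, r.1 < m k ∧ r.2 < m k)
    (hAc : ∀ k, VerticalExitPairAt (m k) (A k) (c k)) (n : ℕ) :
    VerticalExitPairAt (mProd m n) (whites m A n) (exitColumn m c n) := by
  have hm (k : ℕ) : 0 < m k := ((hA k _ ((hAc k (c k)).2 rfl).2).1).pos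
  induction n with
  | zero => intro i; simp [whites, mProd, exitColumn]
  | succ n ih => rw [mProd_succ]; exact ih.subst (hA n) (mProd_pos hm n) (hAc n)

theorem sum_range_div_mProd {m : ℕ → ℕ} (hm : ∀ k, 0 < m k) (c : ℕ → ℕ) (n : ℕ) :
    ∑ k ∈ Finset.range n, ((c k : ℝ) / m k) / mProd m k = exitColumn m c n / mProd m n := by
  induction n with
  | zero => simp [exitColumn]
  | succ n ih =>
    have hmn : (m n : ℝ) ≠ 0 := (Nat.cast_pos.2 (hm n)).ne'
    have hMn : (mProd m n : ℝ) ≠ 0 := (Nat.cast_pos.2 (mProd_pos hm n)).ne'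
    rw [Finset.sum_range_succ, ih, exitColumn, mProd_succ]
    push_cast
    field_simp

end Labyrinth

open Labyrinth in
/-- coordinates of the top and bottom exits of `L_∞`. With `tc k` the
column index of the top exit square of `𝒜_{k+1}` (so its lower-left vertex has
coordinates `(tc k / m k, (m k - 1)/m k)`), the top exit is
`(Σ_k (tc k / m k)/m(k), 1)` and the bottom exit is `(Σ_k (tc k / m k)/m(k), 0)`. -/
theorem top_bottom_exit_coords (m : ℕ → ℕ) (A : ℕ → Set (ℕ × ℕ))
    (hlab : ∀ k, IsLabyrinthPattern (m k) (A k))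
    (t b : ℝ × ℝ)
    (ht : IsExitPoint m A Side.top t) (hb : IsExitPoint m A Side.bottom b)
    (tc : ℕ → ℕ) (htc : ∀ k, IsExitSq (m k) (A k) Side.top (tc k, m k - 1)) :
    t.1 = ∑' k, ((tc k : ℝ) / (m k : ℝ)) / (mProd m k : ℝ) ∧
    b.1 = ∑' k, ((tc k : ℝ) / (m k : ℝ)) / (mProd m k : ℝ) ∧
    t.2 = 1 ∧ b.2 = 0 := by
  have hm (k : ℕ) : 2 ≤ m k := le_trans (by norm_num) (hlab k).1
  have hW := verticalExitPairAt_whites (fun k => (hlab k).2.1.2)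
    fun k => (hlab k).verticalExitPairAt (htc k)
  have hM := tendsto_mProd_atTop hm
  have ht_cell : ∀ᶠ n in Filter.atTop, t ∈ cell (mProd m n) (exitColumn m tc n, mProd m n - 1) :=
    Filter.eventually_atTop.2 ⟨1, fun n hn => by
      obtain ⟨p, hp, ht⟩ := ht n hn
      rwa [(hW n).isExitSq_top_iff.1 hp] at ht⟩
  have hb_cell : ∀ᶠ n in Filter.atTop, b ∈ cell (mProd m n) (exitColumn m tc n, 0) :=
    Filter.eventually_atTop.2 ⟨1, fun n hn => by
      obtain ⟨p, hp, hb⟩ := hb n hn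
      rwa [(hW n).isExitSq_bottom_iff.1 hp] at hb⟩
  obtain ⟨ht₁, ht₂⟩ := tendsto_div_of_mem_cell hM ht_cell
  obtain ⟨hb₁, hb₂⟩ := tendsto_div_of_mem_cell hM hb_cell
  have hsum : HasSum (fun k => ((tc k : ℝ) / (m k : ℝ)) / (mProd m k : ℝ)) t.1 := by
    rw [hasSum_iff_tendsto_nat_of_nonneg (fun k => by positivity)]
    simpa only [sum_range_div_mProd (fun k => (hm k).trans_lt' two_pos) tc] using ht₁
  refine ⟨hsum.tsum_eq.symm, (tendsto_nhds_unique hb₁ ht₁).trans hsum.tsum_eq.symm,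
    tendsto_nhds_unique ht₂ (tendsto_natCast_sub_one_div_self hM), ?_⟩
  simpa [eq_comm] using hb₂
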